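/- arXiv:2102.03896 — 4 statements merged into one kernel-verified Lean document; each statement's English description precedes it below -/
import Mathlib

section
/- Let C : ℝ^L → ℝ be continuous and strictly increasing in each coordinate and U : ℝ^L → ℝ continuous and strictly increasing in each coordinate. Suppose that for every u ∈ ℝ the set {s ∈ ℝ^L : C(s) ≤ 0 and U(s) ≥ u} is compact. Fix a nonempty proper subset J of {1,...,L}, a continuous strictly increasing proxy Ũ : ℝ^J → ℝ, a real u, and k ∉ J. Then there exists B ∈ ℝ such that if the lower bound b_k on coordinate k satisfies b_k < B, then every feasible path s^(t) with limsup_{t→∞} Ũ(s_J^(t)) = sup_{s feasible, s_i ≥ b_i ∀i} Ũ(s_J) satisfies liminf_{t→∞} U(s^(t)) ≤ u. -/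
/-!
Let `m` bound the `k`-th coordinate from below on the compact set `{C ≤ 0, u ≤ U}` and take
`B = m`. If `liminf U(p t) > u`, the path eventually stays in the compact feasible set with the
`k`-th bound raised to `m`, so `limsup Ũ(p_J)` is at most the maximum `Ũ(s*_J)` over that set.
Lowering `s*_k` to `b_k` leaves `Ũ` unchanged and makes `C` strictly negative, which leaves room
to raise a coordinate in `J`; this yields a feasible point with larger proxy value, so the
complete-optimization condition fails.
-/

def StrictIncEach {L : ℕ} (f : (Fin L → ℝ) → ℝ) : Prop :=
  ∀ s : Fin L → ℝ, ∀ i : Fin L, ∀ x : ℝ, s i < x → f s < f (Function.update s i x)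

def StrictIncEachSub {L : ℕ} (J : Finset (Fin L)) (g : ({i // i ∈ J} → ℝ) → ℝ) : Prop :=
  ∀ s : {i // i ∈ J} → ℝ, ∀ j : {i // i ∈ J}, ∀ x : ℝ, s j < x → g s < g (Function.update s j x)

open Filter Function

theorem monotone_of_le_update {ι α β : Type*} [Fintype ι] [DecidableEq ι] [Preorder α]
    [Preorder β] {f : (ι → α) → β} (hf : ∀ s i x, s i ≤ x → f s ≤ f (update s i x)) :
    Monotone f := by
  suffices key : ∀ A : Finset ι, ∀ s t : ι → α, s ≤ t → (∀ i ∉ A, s i = t i) → f s ≤ f t from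
    fun s t hst => key Finset.univ s t hst (by simp)
  intro A
  induction A using Finset.induction_on with
  | empty => exact fun s t _ h => (funext fun i => h i (Finset.notMem_empty i)) ▸ le_rfl
  | insert a A _ ih =>
    intro s t hst hout
    refine (hf s a (t a) (hst a)).trans (ih _ t (update_le_iff.2 ⟨le_rfl, fun i _ => hst i⟩) ?_)
    intro i hi
    by_cases hia : i = a
    · subst hia; simp
    · rw [update_of_ne hia]
      exact hout i (by simp [hia, hi])

theorem StrictIncEach.monotone {L : ℕ} {f : (Fin L → ℝ) → ℝ} (hf : StrictIncEach f) :
    Monotone f :=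
  monotone_of_le_update fun s i x hx => hx.eq_or_lt.elim
    (fun h => by rw [← h, update_eq_self]) (fun h => (hf s i x h).le)

theorem StrictIncEach.apply_update_lt {L : ℕ} {f : (Fin L → ℝ) → ℝ} (hf : StrictIncEach f)
    {s : Fin L → ℝ} {i : Fin L} {x : ℝ} (hx : x < s i) : f (update s i x) < f s := by
  simpa using hf (update s i x) i (s i) (by simpa using hx)

theorem Continuous.exists_update_gt_lt {ι : Type*} [DecidableEq ι] {f : (ι → ℝ) → ℝ}
    (hf : Continuous f) {s : ι → ℝ} {c : ℝ} (hs : f s < c) (i : ι) :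
    ∃ x, s i < x ∧ f (Function.update s i x) < c := by
  have hcont : Continuous fun x => f (Function.update s i x) :=
    hf.comp (continuous_const.update i continuous_id)
  exact Eventually.exists_gt ((hcont.tendsto (s i)).eventually_lt_const (by simpa using hs))

theorem Finset.restrict_update_of_notMem {ι β : Type*} [DecidableEq ι] {J : Finset ι} {k : ι}
    (hk : k ∉ J) (s : ι → β) (x : β) : J.restrict (update s k x) = J.restrict s :=
  update_comp_eq_of_notMem_range s x (by simpa using hk)

theorem Finset.restrict_update_of_mem {ι β : Type*} [DecidableEq ι] {J : Finset ι} {j : ι}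
    (hj : j ∈ J) (s : ι → β) (x : β) :
    J.restrict (update s j x) = update (J.restrict s) ⟨j, hj⟩ x :=
  update_comp_eq_of_injective s Subtype.val_injective ⟨j, hj⟩ x

def feasibleSet {ι : Type*} (C : (ι → ℝ) → ℝ) (b : ι → ℝ) : Set (ι → ℝ) :=
  {s | C s ≤ 0 ∧ b ≤ s}

theorem isCompact_feasibleSet {ι : Type*} {C U : (ι → ℝ) → ℝ} (hCc : Continuous C)
    (hUm : Monotone U) (hcompact : ∀ u, IsCompact {s | C s ≤ 0 ∧ u ≤ U s})
    (b : ι → ℝ) :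
    IsCompact (feasibleSet C b) :=
  (hcompact (U b)).of_isClosed_subset
    ((isClosed_le hCc continuous_const).inter (isClosed_le continuous_const continuous_id))
    fun _ hs => ⟨hs.1, hUm hs.2⟩

theorem exists_mem_feasibleSet_proxy_lt {L : ℕ} {C : (Fin L → ℝ) → ℝ} (hCc : Continuous C)
    (hCm : StrictIncEach C) {J : Finset (Fin L)} {Ut : (J → ℝ) → ℝ}
    (hUtm : StrictIncEachSub J Ut)
    {j k : Fin L} (hj : j ∈ J) (hk : k ∉ J) {b : Fin L → ℝ} {m bk : ℝ} (hbk : bk < m)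
    {s : Fin L → ℝ} (hs : s ∈ feasibleSet C (update b k m)) :
    ∃ s' ∈ feasibleSet C (update b k bk), Ut (J.restrict s) < Ut (J.restrict s') := by
  have hbs : update b k bk ≤ update s k bk :=
    update_le_update_iff.2 ⟨le_rfl, fun i hi => by simpa [hi] using hs.2 i⟩
  have hslack : C (update s k bk) < 0 :=
    (hCm.apply_update_lt (hbk.trans_le (by simpa using hs.2 k))).trans_le hs.1
  obtain ⟨x, hx, hCx⟩ := hCc.exists_update_gt_lt hslack j
  have hbx : update b k bk ≤ update (update s k bk) j x :=
    hbs.trans (le_update_iff.2 ⟨hx.le, fun _ _ => le_rfl⟩)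
  refine ⟨update (update s k bk) j x, ⟨hCx.le, hbx⟩, ?_⟩
  rw [Finset.restrict_update_of_mem hj, ← Finset.restrict_update_of_notMem hk s bk]
  exact hUtm _ _ x hx

theorem limsup_comp_lt_sSup_image {X α : Type*} [TopologicalSpace X] {l : Filter α} [l.NeBot]
    {φ : X → ℝ} (hφ : Continuous φ) {K F : Set X} (hK : IsCompact K) (hF : IsCompact F)
    (hKF : ∀ s ∈ K, ∃ s' ∈ F, φ s < φ s') {p : α → X} (hpF : ∀ t, p t ∈ F)
    (hpK : ∀ᶠ t in l, p t ∈ K) : limsup (φ ∘ p) l < sSup (φ '' F) := by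
  obtain ⟨t, ht⟩ := hpK.exists
  obtain ⟨s, hsK, hmax⟩ := hK.exists_isMaxOn ⟨p t, ht⟩ hφ.continuousOn
  obtain ⟨s', hs'F, hlt⟩ := hKF s hsK
  have hbdd : IsBoundedUnder (· ≥ ·) l (φ ∘ p) := by
    obtain ⟨c, hc⟩ := (hF.image hφ).bddBelow
    exact isBoundedUnder_of ⟨c, fun t => hc ⟨p t, hpF t, rfl⟩⟩
  calc limsup (φ ∘ p) l
      ≤ φ s := limsup_le_of_le hbdd.isCoboundedUnder_le (hpK.mono fun _ h => hmax h)
    _ < φ s' := hlt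
    _ ≤ sSup (φ '' F) := le_csSup (hF.image hφ).bddAbove ⟨s', hs'F, rfl⟩

theorem stmt_1_general {L : ℕ} (C U : (Fin L → ℝ) → ℝ)
    (hCc : Continuous C) (hCm : StrictIncEach C)
    (hUm : StrictIncEach U)
    (hcompact : ∀ u : ℝ, IsCompact {s : Fin L → ℝ | C s ≤ 0 ∧ u ≤ U s})
    (J : Finset (Fin L)) (hJne : J.Nonempty)
    (Ut : ({i // i ∈ J} → ℝ) → ℝ) (hUtc : Continuous Ut) (hUtm : StrictIncEachSub J Ut)
    (u : ℝ) (k : Fin L) (hk : k ∉ J) (b : Fin L → ℝ) :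
    ∃ B : ℝ, ∀ bk : ℝ, bk < B →
      -- feasible set with lower bounds `Function.update b k bk`
      (∀ p : ℝ → Fin L → ℝ, Continuous p →
        (∀ t : ℝ, C (p t) ≤ 0 ∧ ∀ i : Fin L, Function.update b k bk i ≤ p t i) →
        Filter.limsup (fun t => Ut (fun j : {i // i ∈ J} => p t j)) Filter.atTop =
          sSup ((fun s : Fin L → ℝ => Ut (fun j : {i // i ∈ J} => s j)) ''
            {s | C s ≤ 0 ∧ ∀ i : Fin L, Function.update b k bk i ≤ s i}) →
        Filter.liminf (fun t => U (p t)) Filter.atTop ≤ u) := by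
  obtain ⟨j, hj⟩ := hJne
  obtain ⟨m, hm⟩ := ((hcompact u).image (continuous_apply k)).bddBelow
  refine ⟨m, fun bk hbk p _ hp hsup => ?_⟩
  by_contra! hlim
  have hUp : ∀ᶠ t in atTop, u < U (p t) :=
    eventually_lt_of_lt_liminf hlim (isBoundedUnder_of ⟨_, fun t => hUm.monotone (hp t).2⟩)
  have hpK : ∀ᶠ t in atTop, p t ∈ feasibleSet C (update b k m) := hUp.mono fun t ht =>
    ⟨(hp t).1, update_le_iff.2 ⟨hm ⟨p t, ⟨(hp t).1, ht.le⟩, rfl⟩,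
      fun i hi => by simpa [hi] using (hp t).2 i⟩⟩
  have hφ : Continuous fun s : Fin L → ℝ => Ut (J.restrict s) :=
    hUtc.comp (continuous_pi fun i => continuous_apply _)
  exact (limsup_comp_lt_sSup_image hφ (isCompact_feasibleSet hCc hUm.monotone hcompact _)
    (isCompact_feasibleSet hCc hUm.monotone hcompact _)
    (fun s hs => exists_mem_feasibleSet_proxy_lt hCc hCm hUtm hj hk hbk hs) hp hpK).ne hsup

/-- Forward direction of the overoptimization theorem. -/
theorem stmt_1 {L : ℕ} (C U : (Fin L → ℝ) → ℝ)
    (hCc : Continuous C) (hCm : StrictIncEach C)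
    (hUc : Continuous U) (hUm : StrictIncEach U)
    (hcompact : ∀ u : ℝ, IsCompact {s : Fin L → ℝ | C s ≤ 0 ∧ u ≤ U s})
    (J : Finset (Fin L)) (hJne : J.Nonempty) (hJprop : J ≠ Finset.univ)
    (Ut : ({i // i ∈ J} → ℝ) → ℝ) (hUtc : Continuous Ut) (hUtm : StrictIncEachSub J Ut)
    (u : ℝ) (k : Fin L) (hk : k ∉ J) (b : Fin L → ℝ) :
    ∃ B : ℝ, ∀ bk : ℝ, bk < B →
      -- feasible set with lower bounds `Function.update b k bk`
      (∀ p : ℝ → Fin L → ℝ, Continuous p →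
        (∀ t : ℝ, C (p t) ≤ 0 ∧ ∀ i : Fin L, Function.update b k bk i ≤ p t i) →
        Filter.limsup (fun t => Ut (fun j : {i // i ∈ J} => p t j)) Filter.atTop =
          sSup ((fun s : Fin L → ℝ => Ut (fun j : {i // i ∈ J} => s j)) ''
            {s | C s ≤ 0 ∧ ∀ i : Fin L, Function.update b k bk i ≤ s i}) →
        Filter.liminf (fun t => U (p t)) Filter.atTop ≤ u) :=
  stmt_1_general C U hCc hCm hUm hcompact J hJne Ut hUtc hUtm u k hk b
end

section
/- Suppose U(s) = Σ_i u_i(s_i) and C(s) = Σ_i c_i(s_i) with each u_i, c_i continuously differentiable and strictly increasing, c_i'(x) ≥ η > 0 for all i and x, and each sensitivity u_i'(x)/c_i'(x) non-increasing in x and tending to 0 as x → ∞. Then for every u ∈ ℝ the set {s ∈ ℝ^L : C(s) ≤ 0 and U(s) ≥ u} is compact. -/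
/-!
The sensitivities are positive (each `uᵢ` is strictly increasing and `uᵢ'/cᵢ'` is non-increasing),
so we can fix `0 < λ` below every sensitivity at `0`. Then `ψᵢ = uᵢ - λ cᵢ` has derivative
`(uᵢ'/cᵢ' - λ) cᵢ'`, which, because `cᵢ' ≥ η`, is at least a positive constant on `(-∞, 0]` (the
sensitivity is non-increasing) and at most a negative constant near `+∞` (the sensitivity tends to
`0`). So each `ψᵢ` is bounded above and tends to `-∞` in both directions, hence the separable sum
`Ψ(s) = ∑ ψᵢ(sᵢ)` is coercive on `ℝ^L` and its superlevel sets are compact. On the feasible set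
`Ψ(s) = U(s) - λ C(s) ≥ U(s) ≥ u`, so it is a closed subset of such a superlevel set.
-/

open Filter Topology Set

noncomputable def sensitivity (u c : ℝ → ℝ) (x : ℝ) : ℝ := deriv u x / deriv c x

theorem isCompact_setOf_le_of_tendsto_cocompact_atBot {X α : Type*} [TopologicalSpace X]
    [LinearOrder α] [TopologicalSpace α] [ClosedIciTopology α] [NoMinOrder α] {f : X → α}
    (hf : Continuous f) (hlim : Tendsto f (cocompact X) atBot) (a : α) :
    IsCompact {x | a ≤ f x} := by
  obtain ⟨K, hK, hKf⟩ := mem_cocompact.1 (hlim.eventually (eventually_lt_atBot a))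
  refine hK.of_isClosed_subset (isClosed_Ici.preimage hf) fun x hx => ?_
  by_contra hxK
  exact (hKf hxK).not_ge hx

theorem tendsto_sum_apply_cocompact_atBot {ι G : Type*} [Fintype ι] {X : ι → Type*}
    [∀ i, TopologicalSpace (X i)] [AddCommGroup G] [PartialOrder G] [IsOrderedAddMonoid G]
    {f : ∀ i, X i → G} (hbdd : ∀ i, BddAbove (range (f i)))
    (hf : ∀ i, Tendsto (f i) (cocompact (X i)) atBot) :
    Tendsto (fun x => ∑ i, f i (x i)) (cocompact (∀ i, X i)) atBot := by
  classical
  choose M hM using fun i => (hbdd i)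
  rw [← coprodᵢ_cocompact, Filter.coprodᵢ, tendsto_iSup]
  intro i
  refine tendsto_atBot_mono (fun x => ?_)
    (tendsto_atBot_add_const_right _ (∑ j, M j - M i) ((hf i).comp tendsto_comap))
  have hrest : ∑ j ∈ Finset.univ.erase i, f j (x j) ≤ ∑ j ∈ Finset.univ.erase i, M j :=
    Finset.sum_le_sum fun j _ => hM j (mem_range_self _)
  rw [Finset.sum_erase_eq_sub (Finset.mem_univ i), Finset.sum_erase_eq_sub (Finset.mem_univ i)]
    at hrest
  exact sub_le_iff_le_add'.1 hrest

theorem tendsto_atTop_atBot_of_deriv_le {f : ℝ → ℝ} (hf : Differentiable ℝ f) {k : ℝ}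
    (hk : 0 < k) (h : ∀ᶠ x in atTop, deriv f x ≤ -k) : Tendsto f atTop atBot := by
  obtain ⟨R, hR⟩ := eventually_atTop.1 h
  have hlin : ∀ x ≥ R, f x ≤ f R + -k * (x - R) := fun x hx => by
    have := (convex_Ici R).image_sub_le_mul_sub_of_deriv_le hf.continuous.continuousOn
      hf.differentiableOn (fun y hy => hR y (interior_subset hy)) R self_mem_Ici x hx hx
    linarith
  refine tendsto_atBot_mono' atTop (eventually_atTop.2 ⟨R, hlin⟩) ?_
  exact tendsto_atBot_add_const_left _ _
    ((tendsto_atTop_add_const_right _ (-R) tendsto_id).const_mul_atTop_of_neg (neg_lt_zero.2 hk))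

theorem tendsto_atBot_atBot_of_le_deriv {f : ℝ → ℝ} (hf : Differentiable ℝ f) {k : ℝ}
    (hk : 0 < k) (h : ∀ᶠ x in atBot, k ≤ deriv f x) : Tendsto f atBot atBot := by
  have hneg : Tendsto (fun x => f (-x)) atTop atBot := by
    refine tendsto_atTop_atBot_of_deriv_le (hf.comp differentiable_neg) hk ?_
    filter_upwards [tendsto_neg_atTop_atBot.eventually h] with x hx
    rw [deriv_comp_neg]
    linarith
  simpa [Function.comp_def] using hneg.comp tendsto_neg_atBot_atTop

section Sensitivity

variable {u c : ℝ → ℝ}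

theorem sensitivity_pos (hu : Differentiable ℝ u) (hum : StrictMono u)
    (hc : ∀ x, 0 < deriv c x) (hanti : Antitone (sensitivity u c)) (x : ℝ) :
    0 < sensitivity u c x := by
  obtain ⟨z, hz, hslope⟩ := exists_deriv_eq_slope u (lt_add_one x) hu.continuous.continuousOn
    hu.differentiableOn
  have huz : 0 < deriv u z := by
    rw [hslope]
    exact div_pos (sub_pos.2 (hum (lt_add_one x))) (by linarith)
  exact (div_pos huz (hc z)).trans_le (hanti hz.1.le)

theorem deriv_sub_const_mul_eq_sensitivity (hu : Differentiable ℝ u) (hc : Differentiable ℝ c)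
    (hc0 : ∀ x, deriv c x ≠ 0) (lam x : ℝ) :
    deriv (fun y => u y - lam * c y) x = (sensitivity u c x - lam) * deriv c x := by
  rw [deriv_fun_sub (hu x) ((hc x).const_mul lam), deriv_const_mul lam (hc x), sensitivity,
    sub_mul, div_mul_cancel₀ _ (hc0 x)]

theorem tendsto_sub_const_mul_cocompact_atBot (hu : Differentiable ℝ u)
    (hc : Differentiable ℝ c) {η : ℝ} (hη : 0 < η) (hcη : ∀ x, η ≤ deriv c x)
    (hanti : Antitone (sensitivity u c)) (hlim : Tendsto (sensitivity u c) atTop (𝓝 0))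
    {lam x₀ : ℝ} (hlam : 0 < lam) (hlt : lam < sensitivity u c x₀) :
    Tendsto (fun x => u x - lam * c x) (cocompact ℝ) atBot := by
  have hc0 : ∀ x, 0 < deriv c x := fun x => hη.trans_le (hcη x)
  have hψ : Differentiable ℝ fun x => u x - lam * c x := hu.sub (hc.const_mul lam)
  refine (tendsto_sup.2 ⟨?_, ?_⟩).mono_left cocompact_le_atBot_atTop
  · refine tendsto_atBot_atBot_of_le_deriv hψ (mul_pos (sub_pos.2 hlt) hη) ?_
    filter_upwards [eventually_le_atBot x₀] with x hx
    rw [deriv_sub_const_mul_eq_sensitivity hu hc (fun x => (hc0 x).ne') lam x]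
    exact mul_le_mul (by linarith [hanti hx]) (hcη x) hη.le (by linarith [hanti hx])
  · refine tendsto_atTop_atBot_of_deriv_le hψ (half_pos (mul_pos hlam hη)) ?_
    filter_upwards [hlim.eventually (eventually_le_nhds (half_pos hlam))] with x hx
    rw [deriv_sub_const_mul_eq_sensitivity hu hc (fun x => (hc0 x).ne') lam x]
    nlinarith [hcη x]

end Sensitivity

theorem stmt_4_general {L : ℕ} (u c : Fin L → ℝ → ℝ) (η : ℝ) (hη : 0 < η)
    (hud : ∀ i, Differentiable ℝ (u i))
    (hcd : ∀ i, Differentiable ℝ (c i))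
    (hum : ∀ i, StrictMono (u i))
    (hcη : ∀ i x, η ≤ deriv (c i) x)
    (hsens_mono : ∀ i, Antitone (fun x => deriv (u i) x / deriv (c i) x))
    (hsens_lim : ∀ i, Filter.Tendsto (fun x => deriv (u i) x / deriv (c i) x)
      Filter.atTop (nhds 0)) :
    ∀ u0 : ℝ, IsCompact
      {s : Fin L → ℝ | (∑ i, c i (s i)) ≤ 0 ∧ u0 ≤ ∑ i, u i (s i)} := by
  intro u0
  have hsens_pos i : 0 < sensitivity (u i) (c i) 0 :=
    sensitivity_pos (hud i) (hum i) (fun x => hη.trans_le (hcη i x)) (hsens_mono i) 0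
  obtain ⟨lam, hlt, hlam⟩ : ∃ lam : ℝ, (∀ i, lam < sensitivity (u i) (c i) 0) ∧ 0 < lam :=
    ((eventually_all.2 fun i => (eventually_lt_nhds (hsens_pos i)).filter_mono
      nhdsWithin_le_nhds).and self_mem_nhdsWithin).exists (f := 𝓝[>] 0)
  set ψ : Fin L → ℝ → ℝ := fun i x => u i x - lam * c i x
  have hψ_cont i : Continuous (ψ i) := ((hud i).sub ((hcd i).const_mul lam)).continuous
  have hψ_lim i : Tendsto (ψ i) (cocompact ℝ) atBot :=
    tendsto_sub_const_mul_cocompact_atBot (hud i) (hcd i) hη (hcη i) (hsens_mono i)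
      (hsens_lim i) hlam (hlt i)
  have hψ_bdd i : BddAbove (range (ψ i)) := by
    obtain ⟨x, hx⟩ := (hψ_cont i).exists_forall_ge (hψ_lim i)
    exact ⟨ψ i x, forall_mem_range.2 hx⟩
  have hΨ_compact : IsCompact {s : Fin L → ℝ | u0 ≤ ∑ i, ψ i (s i)} :=
    isCompact_setOf_le_of_tendsto_cocompact_atBot (by fun_prop)
      (tendsto_sum_apply_cocompact_atBot hψ_bdd hψ_lim) u0
  refine hΨ_compact.of_isClosed_subset ?_ fun s ⟨hs_C, hs_U⟩ => ?_
  · have hC_cont : Continuous fun s : Fin L → ℝ => ∑ i, c i (s i) :=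
      continuous_finsetSum _ fun i _ => (hcd i).continuous.comp (continuous_apply i)
    have hU_cont : Continuous fun s : Fin L → ℝ => ∑ i, u i (s i) :=
      continuous_finsetSum _ fun i _ => (hud i).continuous.comp (continuous_apply i)
    exact (isClosed_le hC_cont continuous_const).inter (isClosed_le continuous_const hU_cont)
  · have hΨ : ∑ i, ψ i (s i) = ∑ i, u i (s i) - lam * ∑ i, c i (s i) := by
      simp only [ψ, Finset.sum_sub_distrib, Finset.mul_sum]
    change u0 ≤ ∑ i, ψ i (s i)
    linarith [mul_nonpos_of_nonneg_of_nonpos hlam.le hs_C]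

/-- Proposition 2: sufficient conditions for compactness of the feasible
upper-contour sets, with additively separable utility and constraint. -/
theorem stmt_4 {L : ℕ} (u c : Fin L → ℝ → ℝ) (η : ℝ) (hη : 0 < η)
    (hud : ∀ i, Differentiable ℝ (u i)) (hud' : ∀ i, Continuous (deriv (u i)))
    (hcd : ∀ i, Differentiable ℝ (c i)) (hcd' : ∀ i, Continuous (deriv (c i)))
    (hum : ∀ i, StrictMono (u i)) (hcm : ∀ i, StrictMono (c i))
    (hcη : ∀ i x, η ≤ deriv (c i) x)
    (hsens_mono : ∀ i, Antitone (fun x => deriv (u i) x / deriv (c i) x))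
    (hsens_lim : ∀ i, Filter.Tendsto (fun x => deriv (u i) x / deriv (c i) x)
      Filter.atTop (nhds 0)) :
    ∀ u0 : ℝ, IsCompact
      {s : Fin L → ℝ | (∑ i, c i (s i)) ≤ 0 ∧ u0 ≤ ∑ i, u i (s i)} :=
  stmt_4_general u c η hη hud hcd hum hcη hsens_mono hsens_lim
end

section
/- Under the hypotheses of Proposition 2 (additively separable U, C; c_i' ≥ η > 0; sensitivities u_i'/c_i' non-increasing and tending to 0), let v be a unit vector with at least one strictly positive and at least one strictly negative component, and s^(0) feasible. If s^(0) + tv remains feasible for all t ≥ 0, then U(s^(0) + tv) → −∞ as t → ∞. -/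
/-!
Write `σᵢ = uᵢ' / cᵢ'` for the sensitivities. They are positive, so fix `ε > 0` with
`2ε ≤ σᵢ(s⁰ᵢ)` for all `i`, and points `Aᵢ ≥ s⁰ᵢ` beyond which `σᵢ ≤ ε`. Since `σᵢ` is
antitone, a coordinate that has moved past `Aᵢ` gains utility at rate at most `ε` per unit of
cost, while a coordinate that has moved below `s⁰ᵢ` loses utility at rate at least `2ε` per unit
of cost saved. Once every increasing coordinate is past `Aᵢ`, the feasibility budget lets the
gains be paid at rate `ε` out of the savings, and the remaining loss, at rate `ε`, is at least
`ε η t |vⱼ|` for a coordinate `j` with `vⱼ < 0`.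
-/

open Filter Set

section Sensitivity

variable {f g : ℝ → ℝ}

theorem sub_le_sub_of_deriv_le (hf : Differentiable ℝ f) (hg : Differentiable ℝ g) {a b : ℝ}
    (hab : a ≤ b) (h : ∀ x ∈ Ioo a b, deriv f x ≤ deriv g x) : f b - f a ≤ g b - g a := by
  have hgf : Differentiable ℝ (g - f) := hg.sub hf
  have hmono : MonotoneOn (g - f) (Icc a b) := by
    refine monotoneOn_of_deriv_nonneg (convex_Icc a b) hgf.continuous.continuousOn
      hgf.differentiableOn fun x hx => ?_
    rw [interior_Icc] at hx
    rw [deriv_sub (hg x) (hf x), sub_nonneg]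
    exact h x hx
  have := hmono (left_mem_Icc.2 hab) (right_mem_Icc.2 hab) hab
  simp only [Pi.sub_apply] at this
  linarith

variable (hf : Differentiable ℝ f) (hg : Differentiable ℝ g) (hg' : ∀ x, 0 < deriv g x)
  (hσ : Antitone fun x => deriv f x / deriv g x)
include hf hg hg' hσ

theorem sub_le_mul_sub_of_sensitivity_le {a x k : ℝ} (hax : a ≤ x)
    (hk : deriv f a / deriv g a ≤ k) : f x - f a ≤ k * (g x - g a) := by
  have := sub_le_sub_of_deriv_le hf (hg.const_mul k) hax fun y hy => by
    rw [deriv_const_mul k (hg y), ← div_le_iff₀ (hg' y)]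
    exact (hσ hy.1.le).trans hk
  linarith

theorem sub_le_mul_sub_of_le_sensitivity {a x k : ℝ} (hxa : x ≤ a)
    (hk : k ≤ deriv f a / deriv g a) : f x - f a ≤ k * (g x - g a) := by
  have := sub_le_sub_of_deriv_le (hg.const_mul k) hf hxa fun y hy => by
    rw [deriv_const_mul k (hg y), ← le_div_iff₀ (hg' y)]
    exact hk.trans (hσ hy.2.le)
  linarith

theorem sensitivity_pos_s12 (hfm : StrictMono f) (x : ℝ) : 0 < deriv f x / deriv g x := by
  by_contra! h
  have := sub_le_mul_sub_of_sensitivity_le hf hg hg' hσ (lt_add_one x).le h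
  linarith [hfm (lt_add_one x)]

theorem apply_le_of_sensitivity_bounds (hfm : Monotone f) {s A x ε : ℝ} (hε : 0 ≤ ε)
    (hsA : s ≤ A) (hA : deriv f A / deriv g A ≤ ε) (hs : 2 * ε ≤ deriv f s / deriv g s)
    (hx : x ≤ s ∨ A ≤ x) : f x ≤ f A + ε * (g x - g s) - ε * (g s - g x)⁺ := by
  have hgm : Monotone g := (strictMono_of_deriv_pos hg').monotone
  rcases hx with hxs | hAx
  · have hloss := sub_le_mul_sub_of_le_sensitivity hf hg hg' hσ hxs hs
    rw [posPart_eq_self.2 (sub_nonneg.2 (hgm hxs))]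
    linarith [hfm hsA]
  · have hgain := sub_le_mul_sub_of_sensitivity_le hf hg hg' hσ hAx hA
    rw [posPart_eq_zero.2 (sub_nonpos.2 (hgm (hsA.trans hAx)))]
    nlinarith [hgm hsA]

end Sensitivity

theorem exists_pos_forall_le_of_pos {ι : Type*} [Finite ι] {a : ι → ℝ} (ha : ∀ i, 0 < a i) :
    ∃ ε > 0, ∀ i, ε ≤ a i := by
  have : ∀ᶠ ε in nhdsWithin (0 : ℝ) (Ioi 0), ∀ i, ε ≤ a i :=
    eventually_all.2 fun i => nhdsWithin_le_nhds (eventually_le_nhds (ha i))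
  obtain ⟨ε, hεa, hε⟩ := (this.and self_mem_nhdsWithin).exists
  exact ⟨ε, hε, hεa⟩

theorem eventually_le_or_le_along_ray {ι : Type*} [Finite ι] (s v A : ι → ℝ) :
    ∀ᶠ t : ℝ in atTop, ∀ i, s i + t * v i ≤ s i ∨ A i ≤ s i + t * v i := by
  refine eventually_all.2 fun i => ?_
  rcases le_or_gt (v i) 0 with hv | hv
  · filter_upwards [eventually_ge_atTop 0] with t ht
    exact Or.inl (by nlinarith)
  · have : Tendsto (fun t => s i + t * v i) atTop atTop :=
      tendsto_atTop_add_const_left _ _ (tendsto_id.atTop_mul_const hv)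
    exact (this.eventually_ge_atTop (A i)).mono fun _ => Or.inr

theorem stmt_12_general {L : ℕ} (u c : Fin L → ℝ → ℝ) (η : ℝ) (hη : 0 < η)
    (hud : ∀ i, Differentiable ℝ (u i)) (hcd : ∀ i, Differentiable ℝ (c i))
    (hum : ∀ i, StrictMono (u i))
    (hcη : ∀ i x, η ≤ deriv (c i) x)
    (hsens_mono : ∀ i, Antitone (fun x => deriv (u i) x / deriv (c i) x))
    (hsens_lim : ∀ i, Filter.Tendsto (fun x => deriv (u i) x / deriv (c i) x)
      Filter.atTop (nhds 0))
    (v : Fin L → ℝ)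
    (hvneg : ∃ i, v i < 0)
    (s0 : Fin L → ℝ)
    (hfeas : ∀ t : ℝ, 0 ≤ t → (∑ i, c i (s0 i + t * v i)) ≤ 0) :
    Filter.Tendsto (fun t : ℝ => ∑ i, u i (s0 i + t * v i)) Filter.atTop Filter.atBot := by
  obtain ⟨j, hj⟩ := hvneg
  have hc' : ∀ i x, 0 < deriv (c i) x := fun i x => hη.trans_le (hcη i x)
  obtain ⟨ε, hε, hεs⟩ : ∃ ε > 0, ∀ i, ε ≤ deriv (u i) (s0 i) / deriv (c i) (s0 i) / 2 :=
    exists_pos_forall_le_of_pos fun i =>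
      half_pos (sensitivity_pos_s12 (hud i) (hcd i) (hc' i) (hsens_mono i) (hum i) (s0 i))
  choose A hAε hsA using fun i =>
    (((hsens_lim i).eventually (eventually_le_nhds hε)).and (eventually_ge_atTop (s0 i))).exists
  set K := ∑ i, u i (A i) - ε * ∑ i, c i (s0 i)
  have hbound : ∀ᶠ t in atTop, ∑ i, u i (s0 i + t * v i) ≤ K + ε * η * v j * t := by
    filter_upwards [eventually_ge_atTop 0, eventually_le_or_le_along_ray s0 v A] with t ht hx
    have hcoord i := apply_le_of_sensitivity_bounds (hud i) (hcd i) (hc' i) (hsens_mono i)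
      (hum i).monotone hε.le (hsA i) (hAε i) (by linarith [hεs i]) (hx i)
    have hsaving : c j (s0 j) - c j (s0 j + t * v j) ≤ ∑ i, (c i (s0 i) - c i (s0 i + t * v i))⁺ :=
      (le_posPart _).trans
        (Finset.single_le_sum (f := fun i => (c i (s0 i) - c i (s0 i + t * v i))⁺)
          (fun i _ => posPart_nonneg _) (Finset.mem_univ j))
    have hslope := mul_sub_le_image_sub_of_le_deriv (hcd j) (hcη j)
      (show s0 j + t * v j ≤ s0 j by nlinarith)
    calc ∑ i, u i (s0 i + t * v i)
        ≤ ∑ i, (u i (A i) + ε * (c i (s0 i + t * v i) - c i (s0 i))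
            - ε * (c i (s0 i) - c i (s0 i + t * v i))⁺) := Finset.sum_le_sum fun i _ => hcoord i
      _ = K + ε * ∑ i, c i (s0 i + t * v i)
            - ε * ∑ i, (c i (s0 i) - c i (s0 i + t * v i))⁺ := by
        simp only [K, Finset.sum_sub_distrib, Finset.sum_add_distrib, ← Finset.mul_sum]
        ring
      _ ≤ K + ε * η * v j * t := by nlinarith [hfeas t ht]
  exact tendsto_atBot_mono' _ hbound (tendsto_atBot_add_const_left _ K
    (tendsto_id.const_mul_atTop_of_neg (by nlinarith [mul_pos hε hη])))

/-- Along a feasible ray with mixed-sign direction, utility diverges to `-∞`. -/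
theorem stmt_12 {L : ℕ} (u c : Fin L → ℝ → ℝ) (η : ℝ) (hη : 0 < η)
    (hud : ∀ i, Differentiable ℝ (u i)) (hcd : ∀ i, Differentiable ℝ (c i))
    (hum : ∀ i, StrictMono (u i)) (hcm : ∀ i, StrictMono (c i))
    (hcη : ∀ i x, η ≤ deriv (c i) x)
    (hsens_mono : ∀ i, Antitone (fun x => deriv (u i) x / deriv (c i) x))
    (hsens_lim : ∀ i, Filter.Tendsto (fun x => deriv (u i) x / deriv (c i) x)
      Filter.atTop (nhds 0))
    (v : Fin L → ℝ) (hvunit : ‖v‖ = 1)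
    (hvpos : ∃ i, 0 < v i) (hvneg : ∃ i, v i < 0)
    (s0 : Fin L → ℝ) (hs0 : (∑ i, c i (s0 i)) ≤ 0)
    (hfeas : ∀ t : ℝ, 0 ≤ t → (∑ i, c i (s0 i + t * v i)) ≤ 0) :
    Filter.Tendsto (fun t : ℝ => ∑ i, u i (s0 i + t * v i)) Filter.atTop Filter.atBot :=
  stmt_12_general u c η hη hud hcd hum hcη hsens_mono hsens_lim v hvneg s0 hfeas
end

section
/- Let f : [0,∞) → ℝ^L be continuous and define s^(t) = s^(0) + ∫_0^t f(u) du. Suppose ‖f(u)‖ ≤ ε for all u. Then for all t ∈ [0, δ], ‖s^(t) − s^(0)‖ ≤ εδ. Consequently, if the closed εδ-ball around s^(0) is contained in a set N on which increases of a proxy Ũ imply increases of U (relative to s^(0)), then any such rate-bounded optimization over the interval [0, δ] that strictly increases Ũ strictly increases U. -/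
open MeasureTheory

theorem norm_intervalIntegral_le_mul_of_mem_Icc {E : Type*} [NormedAddCommGroup E]
    [NormedSpace ℝ E] {f : ℝ → E} {ε δ t : ℝ} (hε : 0 ≤ ε) (hf : ∀ u, ‖f u‖ ≤ ε)
    (ht : t ∈ Set.Icc 0 δ) : ‖∫ u in (0:ℝ)..t, f u‖ ≤ ε * δ :=
  calc ‖∫ u in (0:ℝ)..t, f u‖ ≤ ε * |t - 0| :=
        intervalIntegral.norm_integral_le_of_norm_le_const fun u _ => hf u
    _ = ε * t := by rw [sub_zero, abs_of_nonneg ht.1]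
    _ ≤ ε * δ := mul_le_mul_of_nonneg_left ht.2 hε

theorem stmt_13_general {L : ℕ} (f : ℝ → Fin L → ℝ)
    (s0 : Fin L → ℝ) (ε δ : ℝ) (hε : 0 ≤ ε)
    (hbound : ∀ t : ℝ, ‖f t‖ ≤ ε)
    (s : ℝ → Fin L → ℝ) (hs : ∀ t : ℝ, s t = s0 + ∫ x in (0:ℝ)..t, f x) :
    (∀ t ∈ Set.Icc (0:ℝ) δ, ‖s t - s0‖ ≤ ε * δ) ∧
    ∀ N : Set (Fin L → ℝ), Metric.closedBall s0 (ε * δ) ⊆ N →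
      ∀ U Ut : (Fin L → ℝ) → ℝ,
        (∀ x ∈ N, Ut s0 < Ut x → U s0 < U x) →
        ∀ t ∈ Set.Icc (0:ℝ) δ, Ut s0 < Ut (s t) → U s0 < U (s t) := by
  have hdisp : ∀ t ∈ Set.Icc (0:ℝ) δ, ‖s t - s0‖ ≤ ε * δ := fun t ht => by
    simpa only [hs t, add_sub_cancel_left] using
      norm_intervalIntegral_le_mul_of_mem_Icc hε hbound ht
  refine ⟨hdisp, fun N hN U Ut hUt t ht hUt_lt => hUt (s t) (hN ?_) hUt_lt⟩
  rw [Metric.mem_closedBall, dist_eq_norm]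
  exact hdisp t ht

/-- Rate-bounded interactive optimization: a speed limit on the rate function keeps
the state in the local-improvement neighborhood for time `δ`, so proxy gains are
true-utility gains. -/
theorem stmt_13 {L : ℕ} (f : ℝ → Fin L → ℝ) (hf : Continuous f)
    (s0 : Fin L → ℝ) (ε δ : ℝ) (hε : 0 ≤ ε) (hδ : 0 ≤ δ)
    (hbound : ∀ t : ℝ, ‖f t‖ ≤ ε)
    (s : ℝ → Fin L → ℝ) (hs : ∀ t : ℝ, s t = s0 + ∫ x in (0:ℝ)..t, f x) :
    (∀ t ∈ Set.Icc (0:ℝ) δ, ‖s t - s0‖ ≤ ε * δ) ∧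
    ∀ N : Set (Fin L → ℝ), Metric.closedBall s0 (ε * δ) ⊆ N →
      ∀ U Ut : (Fin L → ℝ) → ℝ,
        (∀ x ∈ N, Ut s0 < Ut x → U s0 < U x) →
        ∀ t ∈ Set.Icc (0:ℝ) δ, Ut s0 < Ut (s t) → U s0 < U (s t) :=
  stmt_13_general f s0 ε δ hε hbound s hs
end
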